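/- Let Γ be a Fuchsian group and let ρ, ρ′ : Γ → GL₂(ℂ) be two homomorphisms. If there exists a non-constant meromorphic function h on ℍ which is simultaneously ρ-equivariant and ρ′-equivariant, then there exists a character χ : Γ → ℂ^× such that ρ(γ) = χ(γ)ρ′(γ) for all γ ∈ Γ. -/

import Mathlib

noncomputable section

open Complex Matrix

local notation "SL2R" => Matrix.SpecialLinearGroup (Fin 2) ℝ

/-- The upper half-plane `ℍ`, as a subset of `ℂ`. -/
def UH : Set ℂ := {z : ℂ | 0 < z.im}

/-- The action of `γ ∈ SL(2,ℝ)` on the upper half-plane: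
`γ z = (a z + b) / (c z + d)`. -/
def actSL (γ : SL2R) (z : ℂ) : ℂ :=
  (((γ : Matrix (Fin 2) (Fin 2) ℝ) 0 0 : ℂ) * z + ((γ : Matrix (Fin 2) (Fin 2) ℝ) 0 1 : ℂ)) /
    (((γ : Matrix (Fin 2) (Fin 2) ℝ) 1 0 : ℂ) * z + ((γ : Matrix (Fin 2) (Fin 2) ℝ) 1 1 : ℂ))

/-- The Möbius (linear fractional) action `w ↦ (a w + b) / (c w + d)` of a complex
2×2 matrix `M = [[a,b],[c,d]]` on `ℂ`. -/
def moebC (M : Matrix (Fin 2) (Fin 2) ℂ) (w : ℂ) : ℂ :=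
  (M 0 0 * w + M 0 1) / (M 1 0 * w + M 1 1)

/-- A Fuchsian group: a subgroup of `SL(2,ℝ)` which is discrete
(as a subset of the space of 2×2 real matrices). -/
def IsFuchsian (Γ : Subgroup SL2R) : Prop :=
  DiscreteTopology ((fun γ : SL2R => (γ : Matrix (Fin 2) (Fin 2) ℝ)) '' (Γ : Set SL2R))

/-- The matrix `-I₂` as an element of `SL(2,ℝ)`. -/
def negI : SL2R :=
  ⟨!![-1, 0; 0, -1], by norm_num [Matrix.det_fin_two_of]⟩

/-- `h` is `ρ`-equivariant on the upper half-plane: `h (γ z) = ρ(γ) (h z)`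
for all `γ ∈ Γ` and all `z ∈ ℍ` away from the poles of `h`
(where `ρ(γ)` acts by linear fractional transformation). -/
def EquivariantOn (Γ : Subgroup SL2R) (ρ : Γ →* GL (Fin 2) ℂ) (h : ℂ → ℂ) : Prop :=
  ∀ γ : Γ, ∀ z ∈ UH, AnalyticAt ℂ h z → AnalyticAt ℂ h (actSL (γ : SL2R) z) →
    h (actSL (γ : SL2R) z) = moebC (ρ γ) (h z)

/-- `h` is non-constant on `D` (i.e. not constant on its regular points in `D`). -/
def NonconstOn (h : ℂ → ℂ) (D : Set ℂ) : Prop :=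
  ¬ ∃ c : ℂ, ∀ z ∈ D, AnalyticAt ℂ h z → h z = c

/-- The Schwarzian derivative `{h, z} = (h''/h')' - (1/2) (h''/h')²`. -/
def schwarzian (h : ℂ → ℂ) (z : ℂ) : ℂ :=
  deriv (fun w => deriv (deriv h) w / deriv h w) z -
    (1 / 2) * (deriv (deriv h) z / deriv h z) ^ 2

/-- `h` is meromorphic on `D` and all (possible) poles of `h` in `D` are simple. -/
def PolesSimpleOn (h : ℂ → ℂ) (D : Set ℂ) : Prop :=
  ∀ z ∈ D, ∃ hm : MeromorphicAt h z, (-1 : WithTop ℤ) ≤ meromorphicOrderAt h z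

/-- `F = (f₁, f₂)` is a `ℂ²`-valued automorphic form of weight `k` and multiplier
system `ρ` on `Γ`: `F(γ z) = (c z + d) ^ k • ρ(γ) • F(z)` for all `γ ∈ Γ` and all
`z ∈ ℍ` away from the poles of `F`. -/
def IsAutomorphicPair (Γ : Subgroup SL2R) (ρ : Γ →* GL (Fin 2) ℂ) (k : ℤ)
    (f₁ f₂ : ℂ → ℂ) : Prop :=
  ∀ γ : Γ, ∀ z ∈ UH,
    AnalyticAt ℂ f₁ z → AnalyticAt ℂ f₂ z →
    AnalyticAt ℂ f₁ (actSL (γ : SL2R) z) → AnalyticAt ℂ f₂ (actSL (γ : SL2R) z) →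
      f₁ (actSL (γ : SL2R) z) =
        (((γ : SL2R) : Matrix (Fin 2) (Fin 2) ℝ) 1 0 * z +
            ((γ : SL2R) : Matrix (Fin 2) (Fin 2) ℝ) 1 1) ^ k *
          ((ρ γ : Matrix (Fin 2) (Fin 2) ℂ) 0 0 * f₁ z +
            (ρ γ : Matrix (Fin 2) (Fin 2) ℂ) 0 1 * f₂ z) ∧
      f₂ (actSL (γ : SL2R) z) =
        (((γ : SL2R) : Matrix (Fin 2) (Fin 2) ℝ) 1 0 * z +
            ((γ : SL2R) : Matrix (Fin 2) (Fin 2) ℝ) 1 1) ^ k *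
          ((ρ γ : Matrix (Fin 2) (Fin 2) ℂ) 1 0 * f₁ z +
            (ρ γ : Matrix (Fin 2) (Fin 2) ℂ) 1 1 * f₂ z)

/-! For `γ ∈ Γ`, both `ρ(γ)` and `ρ'(γ)` send `h z` to `h (γ z)` wherever `h` is analytic at
`z` and `γ z`. These points form a nonempty open set, whose image under the non-constant `h` is
open by the open mapping theorem, hence infinite. Möbius maps of invertible matrices that agree
at infinitely many points (three suffice) have proportional matrices, and the proportionality
factors form a character because `ρ` and `ρ'` are homomorphisms. -/

open Filter Topology Set

lemma quadratic_coeffs_eq_zero_of_infinite {R : Type*} [CommRing R] [IsDomain R]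
    {a b c : R} {S : Set R} (hS : S.Infinite) (h : ∀ x ∈ S, a * x ^ 2 + b * x + c = 0) :
    a = 0 ∧ b = 0 ∧ c = 0 := by
  open Polynomial in
  have hP : C a * X ^ 2 + C b * X + C c = 0 :=
    eq_zero_of_infinite_isRoot _ (hS.mono fun x hx => by simpa using h x hx)
  refine ⟨?_, ?_, ?_⟩
  · simpa using congrArg (coeff · 2) hP
  · simpa using congrArg (coeff · 1) hP
  · simpa using congrArg (coeff · 0) hP

section Moebius

variable {M N : Matrix (Fin 2) (Fin 2) ℂ}

lemma subsingleton_setOf_moebC_denom_eq_zero (hM : M.det ≠ 0) :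
    {w | M 1 0 * w + M 1 1 = 0}.Subsingleton := by
  intro w₁ (hw₁ : _ = 0) w₂ (hw₂ : _ = 0)
  by_contra hne
  have hc : M 1 0 = 0 := by
    have : M 1 0 * (w₁ - w₂) = 0 := by linear_combination hw₁ - hw₂
    exact (mul_eq_zero.mp this).resolve_right (sub_ne_zero.mpr hne)
  have hd : M 1 1 = 0 := by simpa [hc] using hw₁
  exact hM (by simp [Matrix.det_fin_two, hc, hd])

lemma det_smul_eq_smul_of_cross_mul_eq (hN : N.det ≠ 0) {S : Set ℂ} (hS : S.Infinite)
    (h : ∀ w ∈ S, (M 0 0 * w + M 0 1) * (N 1 0 * w + N 1 1) =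
      (N 0 0 * w + N 0 1) * (M 1 0 * w + M 1 1)) :
    N.det • M = (M 0 0 * N 1 1 - M 0 1 * N 1 0) • N := by
  -- The cross-multiplied identity is a quadratic equation in `w`; its coefficients vanish.
  obtain ⟨e₂, e₁, e₀⟩ := quadratic_coeffs_eq_zero_of_infinite
    (a := M 0 0 * N 1 0 - N 0 0 * M 1 0)
    (b := M 0 0 * N 1 1 + M 0 1 * N 1 0 - N 0 0 * M 1 1 - N 0 1 * M 1 0)
    (c := M 0 1 * N 1 1 - N 0 1 * M 1 1) hS fun w hw => by linear_combination h w hw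
  rw [Matrix.det_fin_two] at hN
  -- `M * adjugate N` is scalar, its diagonal entry being the factor above.
  have hu : M 0 1 * N 0 0 - M 0 0 * N 0 1 = 0 := by
    refine (mul_eq_zero.mp ?_).resolve_right hN
    linear_combination N 0 1 * N 0 1 * e₂ - N 0 0 * N 0 1 * e₁ + N 0 0 * N 0 0 * e₀
  have hv : M 0 1 * N 1 0 - M 1 0 * N 0 1 = 0 := by
    refine (mul_eq_zero.mp ?_).resolve_right hN
    linear_combination N 1 1 * N 0 1 * e₂ - N 1 0 * N 0 1 * e₁ + N 1 0 * N 0 0 * e₀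
  ext i j
  fin_cases i <;> fin_cases j <;> simp [Matrix.det_fin_two]
  · linear_combination N 1 0 * hu
  · linear_combination N 1 1 * hu
  · linear_combination N 1 0 * hv - N 1 1 * e₂
  · linear_combination N 1 1 * hv - N 1 1 * e₁ + N 1 0 * e₀

lemma exists_eq_smul_of_moebC_eqOn (hM : M.det ≠ 0) (hN : N.det ≠ 0) {S : Set ℂ}
    (hS : S.Infinite) (heq : S.EqOn (moebC M) (moebC N)) :
    ∃ c : ℂˣ, M = (c : ℂ) • N := by
  set B := {w | M 1 0 * w + M 1 1 = 0} ∪ {w | N 1 0 * w + N 1 1 = 0}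
  have hS' : (S \ B).Infinite := hS.sdiff
    ((subsingleton_setOf_moebC_denom_eq_zero hM).finite.union
      (subsingleton_setOf_moebC_denom_eq_zero hN).finite)
  have hdet := det_smul_eq_smul_of_cross_mul_eq hN hS' fun w ⟨hwS, hwB⟩ => by
    simp only [B, mem_union, mem_ofPred_eq, not_or] at hwB
    simpa [moebC, div_eq_div_iff hwB.1 hwB.2] using heq hwS
  set c := M 0 0 * N 1 1 - M 0 1 * N 1 0
  have hc : c ≠ 0 := by
    rintro hc
    rw [hc, zero_smul, smul_eq_zero] at hdet
    exact hM (by simp [hdet.resolve_left hN])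
  refine ⟨Units.mk0 (c / N.det) (div_ne_zero hc hN), ?_⟩
  rw [Units.val_mk0, div_eq_inv_mul, mul_smul, ← hdet, smul_smul, inv_mul_cancel₀ hN, one_smul]

end Moebius

lemma MeromorphicOn.eq_of_eventually_eq_const {𝕜 E : Type*} [NontriviallyNormedField 𝕜]
    [NormedAddCommGroup E] [NormedSpace 𝕜 E] {f : 𝕜 → E} {U : Set 𝕜} (hf : MeromorphicOn f U)
    (hU : IsPreconnected U) {x y : 𝕜} {c : E} (hx : x ∈ U) (hc : ∀ᶠ w in 𝓝 x, f w = c)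
    (hy : y ∈ U) (hfy : AnalyticAt 𝕜 f y) : f y = c := by
  set g := fun w => f w - c
  have hgx : meromorphicOrderAt g x = ⊤ := meromorphicOrderAt_eq_top_iff.mpr <|
    (hc.mono fun w hw => sub_eq_zero.mpr hw).filter_mono nhdsWithin_le_nhds
  have hgy : meromorphicOrderAt g y = ⊤ := by
    by_contra hne
    exact meromorphicOrderAt_ne_top_of_isPreconnected (hf.sub (MeromorphicOn.const c)) hU hy hx
      hne hgx
  have hga : AnalyticAt 𝕜 g y := hfy.sub analyticAt_const
  rw [hga.meromorphicOrderAt_eq, ENat.map_eq_top_iff, analyticOrderAt_eq_top] at hgy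
  exact sub_eq_zero.mp hgy.self_of_nhds

lemma MeromorphicOn.infinite_image_of_nonconstOn {f : ℂ → ℂ} {U s : Set ℂ}
    (hf : MeromorphicOn f U) (hU : IsPreconnected U) (hnc : NonconstOn f U) {x : ℂ}
    (hx : x ∈ U) (hfx : AnalyticAt ℂ f x) (hs : s ∈ 𝓝 x) : (f '' s).Infinite := by
  rcases hfx.eventually_constant_or_nhds_le_map_nhds with hconst | hopen
  · exact absurd ⟨f x, fun y hy hfy => hf.eq_of_eventually_eq_const hU hx hconst hy hfy⟩ hnc
  · exact infinite_of_mem_nhds (f x) (hopen (image_mem_map hs))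

lemma isOpen_UH : IsOpen UH := isOpen_lt continuous_const Complex.continuous_im

lemma isPreconnected_UH : IsPreconnected UH := (convex_halfSpace_im_gt 0).isPreconnected

section MoebiusAction

open UpperHalfPlane

lemma actSL_eq_coe_smul (g : SL2R) (z : ℍ) : actSL g z = ↑(g • z) := by
  simp [actSL, coe_specialLinearGroup_apply]

lemma actSL_mem_UH (g : SL2R) {z : ℂ} (hz : z ∈ UH) : actSL g z ∈ UH := by
  change 0 < (actSL g (mk z hz)).im
  rw [actSL_eq_coe_smul]
  exact (g • mk z hz).im_pos

lemma injOn_actSL (g : SL2R) : InjOn (actSL g) UH := fun z hz w hw h => by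
  have : g • mk z hz = g • mk w hw := UpperHalfPlane.ext <| by
    rwa [← actSL_eq_coe_smul, ← actSL_eq_coe_smul]
  simpa using congrArg ((↑) : ℍ → ℂ) (smul_left_cancel g this)

lemma continuousAt_actSL (g : SL2R) {z : ℂ} (hz : z ∈ UH) : ContinuousAt (actSL g) z :=
  (continuousAt_const.mul continuousAt_id |>.add continuousAt_const).div
    (continuousAt_const.mul continuousAt_id |>.add continuousAt_const)
    (linear_ne_zero (mk z hz) (g.row_ne_zero 1))

lemma tendsto_actSL_nhdsNE (g : SL2R) {z : ℂ} (hz : z ∈ UH) :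
    Tendsto (actSL g) (𝓝[≠] z) (𝓝[≠] (actSL g z)) := by
  refine tendsto_nhdsWithin_iff.mpr ⟨(continuousAt_actSL g hz).continuousWithinAt, ?_⟩
  filter_upwards [self_mem_nhdsWithin, nhdsWithin_le_nhds (isOpen_UH.mem_nhds hz)]
    with w hwz hw using fun h => hwz (injOn_actSL g hw hz h)

end MoebiusAction

lemma MeromorphicOn.exists_analyticAt_and_analyticAt_actSL {h : ℂ → ℂ}
    (hmer : MeromorphicOn h UH) (g : SL2R) :
    ∃ z ∈ UH, AnalyticAt ℂ h z ∧ AnalyticAt ℂ h (actSL g z) := by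
  have hI : Complex.I ∈ UH := by simp [UH]
  have hgI := (tendsto_actSL_nhdsNE g hI).eventually
    (hmer _ (actSL_mem_UH g hI)).eventually_analyticAt
  exact ((isOpen_UH.eventually_mem hI).filter_mono nhdsWithin_le_nhds |>.and <|
    (hmer _ hI).eventually_analyticAt.and hgI).exists

lemma exists_eq_smul_of_moebC_comp_eq (g : SL2R) {h : ℂ → ℂ} (hmer : MeromorphicOn h UH)
    (hnc : NonconstOn h UH) {M N : Matrix (Fin 2) (Fin 2) ℂ} (hM : M.det ≠ 0) (hN : N.det ≠ 0)
    (heq : ∀ z ∈ UH, AnalyticAt ℂ h z → AnalyticAt ℂ h (actSL g z) →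
      moebC M (h z) = moebC N (h z)) :
    ∃ c : ℂˣ, M = (c : ℂ) • N := by
  set A := {z | AnalyticAt ℂ h z}
  have hopen : IsOpen (UH ∩ actSL g ⁻¹' A ∩ A) :=
    (ContinuousOn.isOpen_inter_preimage (fun z hz => (continuousAt_actSL g hz).continuousWithinAt)
      isOpen_UH (isOpen_analyticAt ℂ h)).inter (isOpen_analyticAt ℂ h)
  obtain ⟨z, hz, hza, hzg⟩ := hmer.exists_analyticAt_and_analyticAt_actSL g
  refine exists_eq_smul_of_moebC_eqOn hM hN (hmer.infinite_image_of_nonconstOn isPreconnected_UH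
    hnc hz hza (hopen.mem_nhds ⟨⟨hz, hzg⟩, hza⟩)) ?_
  rintro _ ⟨w, ⟨⟨hw, hwg⟩, hwa⟩, rfl⟩
  exact heq w hw hwa hwg

lemma exists_monoidHom_eq_smul_of_forall_exists {G K A : Type*} [Group G] [Field K] [Ring A]
    [Algebra K A] [Nontrivial A] {ρ ρ' : G →* Aˣ}
    (h : ∀ g, ∃ c : Kˣ, (ρ g : A) = (c : K) • (ρ' g : A)) :
    ∃ χ : G →* Kˣ, ∀ g, (ρ g : A) = (χ g : K) • (ρ' g : A) := by
  choose χ hχ using h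
  refine ⟨MonoidHom.mk' χ fun g g' => Units.ext <| smul_left_injective K (ρ' (g * g')).ne_zero ?_,
    hχ⟩
  calc (χ (g * g') : K) • (ρ' (g * g') : A) = ρ (g * g') := (hχ _).symm
    _ = ((χ g * χ g' : Kˣ) : K) • (ρ' (g * g') : A) := by
      rw [map_mul, map_mul, Units.val_mul, Units.val_mul, Units.val_mul, hχ g, hχ g',
        smul_mul_smul_comm]

theorem eq_character_smul_of_doubly_equivariant_general
    (Γ : Subgroup SL2R) (ρ ρ' : Γ →* GL (Fin 2) ℂ)
    (h : ℂ → ℂ) (hmer : MeromorphicOn h UH) (hnc : NonconstOn h UH)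
    (hequiv : EquivariantOn Γ ρ h) (hequiv' : EquivariantOn Γ ρ' h) :
    ∃ χ : Γ →* ℂˣ, ∀ γ : Γ,
      ((ρ γ : GL (Fin 2) ℂ) : Matrix (Fin 2) (Fin 2) ℂ) =
        (χ γ : ℂ) • ((ρ' γ : GL (Fin 2) ℂ) : Matrix (Fin 2) (Fin 2) ℂ) :=
  exists_monoidHom_eq_smul_of_forall_exists fun γ =>
    exists_eq_smul_of_moebC_comp_eq γ hmer hnc (ρ γ).det_ne_zero (ρ' γ).det_ne_zero
      fun z hz hza hzg => (hequiv γ z hz hza hzg).symm.trans (hequiv' γ z hz hza hzg)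

/-- Let `Γ` be a Fuchsian group and `ρ, ρ' : Γ → GL(2,ℂ)` two
homomorphisms. If some non-constant meromorphic function `h` on `ℍ` is simultaneously
`ρ`-equivariant and `ρ'`-equivariant, then there is a character `χ : Γ → ℂˣ` with
`ρ(γ) = χ(γ) ρ'(γ)` for all `γ ∈ Γ`. -/
theorem eq_character_smul_of_doubly_equivariant
    (Γ : Subgroup SL2R) (hΓ : IsFuchsian Γ) (ρ ρ' : Γ →* GL (Fin 2) ℂ)
    (h : ℂ → ℂ) (hmer : MeromorphicOn h UH) (hnc : NonconstOn h UH)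
    (hequiv : EquivariantOn Γ ρ h) (hequiv' : EquivariantOn Γ ρ' h) :
    ∃ χ : Γ →* ℂˣ, ∀ γ : Γ,
      ((ρ γ : GL (Fin 2) ℂ) : Matrix (Fin 2) (Fin 2) ℂ) =
        (χ γ : ℂ) • ((ρ' γ : GL (Fin 2) ℂ) : Matrix (Fin 2) (Fin 2) ℂ) :=
  eq_character_smul_of_doubly_equivariant_general Γ ρ ρ' h hmer hnc hequiv hequiv'
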